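/- arXiv:2008.08289 — 3 statements merged into one kernel-verified Lean document; each statement's English description precedes it below -/
import Mathlib

section
/- Let y ∈ ℝⁿ, let Ω ⊆ {1,…,n}, and let η₁, η₂ > 0. The vector x* ∈ ℝⁿ defined coordinatewise by x*_i = y_i if |y_i| > √η (and x*_i = 0 otherwise), where η = η₁ for i ∈ Ω and η = η₁ + η₂ for i ∉ Ω, minimizes the objective F(x) = ‖y - x‖₂² + η₁‖x‖₀ + η₂‖x restricted to the complement of Ω‖₀, where ‖·‖₀ counts nonzero entries. -/
/-!
The objective separates over coordinates: coordinate `i` contributes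
`(yᵢ - xᵢ)² + ηᵢ·[xᵢ ≠ 0]`, where `ηᵢ = η₁` on `Ω` and `ηᵢ = η₁ + η₂` off `Ω`.
Such a scalar term is at least `min ηᵢ yᵢ²` (the cost of `xᵢ = 0` or the penalty of any
`xᵢ ≠ 0`), and keeping `yᵢ` exactly when `√ηᵢ < |yᵢ|`, i.e. when `ηᵢ < yᵢ²`, attains it.
-/

open Finset

noncomputable section

def penalizedSqErr (η y x : ℝ) : ℝ := (y - x) ^ 2 + if x ≠ 0 then η else 0

def hardThreshold (η y : ℝ) : ℝ := if Real.sqrt η < |y| then y else 0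

lemma min_le_penalizedSqErr (η y x : ℝ) : min η (y ^ 2) ≤ penalizedSqErr η y x := by
  unfold penalizedSqErr
  by_cases hx : x = 0
  · simp [hx]
  · simp only [ne_eq, hx, not_false_eq_true, if_true]
    nlinarith [min_le_left η (y ^ 2), sq_nonneg (y - x)]

lemma penalizedSqErr_hardThreshold {η : ℝ} (hη : 0 ≤ η) (y : ℝ) :
    penalizedSqErr η y (hardThreshold η y) = min η (y ^ 2) := by
  have hkeep : Real.sqrt η < |y| ↔ η < y ^ 2 := by
    rw [← Real.sqrt_sq_eq_abs, Real.sqrt_lt_sqrt_iff hη]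
  unfold penalizedSqErr hardThreshold
  by_cases h : η < y ^ 2
  · have hy : y ≠ 0 := by rintro rfl; linarith
    simp [hkeep.mpr h, hy, min_eq_left h.le]
  · simp [hkeep, h, min_eq_right (not_lt.mp h)]

lemma penalizedSqErr_hardThreshold_le {η : ℝ} (hη : 0 ≤ η) (y x : ℝ) :
    penalizedSqErr η y (hardThreshold η y) ≤ penalizedSqErr η y x :=
  (penalizedSqErr_hardThreshold hη y).trans_le (min_le_penalizedSqErr η y x)

lemma mul_card_filter_eq_sum_ite {ι : Type*} [Fintype ι] (c : ℝ) (p : ι → Prop) [DecidablePred p] :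
    c * (univ.filter p).card = ∑ i, if p i then c else 0 := by
  rw [← sum_filter, sum_const, nsmul_eq_mul, mul_comm]

lemma sum_sq_add_l0_penalties_eq_sum_penalizedSqErr {ι : Type*} [Fintype ι] [DecidableEq ι]
    (y x : ι → ℝ) (Ω : Finset ι) (η₁ η₂ : ℝ) :
    (∑ i, (y i - x i) ^ 2) + η₁ * (univ.filter (fun i => x i ≠ 0)).card
        + η₂ * (univ.filter (fun i => i ∉ Ω ∧ x i ≠ 0)).card
      = ∑ i, penalizedSqErr (if i ∈ Ω then η₁ else η₁ + η₂) (y i) (x i) := by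
  rw [mul_card_filter_eq_sum_ite, mul_card_filter_eq_sum_ite, ← sum_add_distrib,
    ← sum_add_distrib]
  refine sum_congr rfl fun i _ => ?_
  unfold penalizedSqErr
  by_cases hi : i ∈ Ω <;> by_cases hxi : x i = 0 <;> simp [hi, hxi, add_assoc]

/-- Vector hard-thresholding (Lemma 1): coordinatewise hard-thresholding with
threshold `√η₁` on coordinates in `Ω` and `√(η₁+η₂)` outside `Ω` minimizes
`‖y - x‖₂² + η₁‖x‖₀ + η₂‖x_{Ωᶜ}‖₀`. -/
theorem stmt_1 (n : ℕ) (y : Fin n → ℝ) (Ω : Finset (Fin n)) (η₁ η₂ : ℝ)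
    (hη₁ : 0 < η₁) (hη₂ : 0 < η₂)
    (F : (Fin n → ℝ) → ℝ)
    (hF : ∀ x, F x = (∑ i, (y i - x i) ^ 2)
        + η₁ * (Finset.univ.filter (fun i => x i ≠ 0)).card
        + η₂ * (Finset.univ.filter (fun i => i ∉ Ω ∧ x i ≠ 0)).card)
    (xstar : Fin n → ℝ)
    (hx : ∀ i, xstar i =
        if Real.sqrt (if i ∈ Ω then η₁ else η₁ + η₂) < |y i| then y i else 0) :
    ∀ x, F xstar ≤ F x := by
  intro x
  rw [hF, hF, sum_sq_add_l0_penalties_eq_sum_penalizedSqErr,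
    sum_sq_add_l0_penalties_eq_sum_penalizedSqErr]
  refine sum_le_sum fun i _ => ?_
  have hη : 0 ≤ if i ∈ Ω then η₁ else η₁ + η₂ := by split_ifs <;> positivity
  rw [hx i]
  exact penalizedSqErr_hardThreshold_le hη (y i) (x i)

end
end

section
/- For any η₁, η₂ > 0, index set Ω ⊆ Fin n, and y ∈ ℝⁿ, the minimum value of F(x) = ‖y - x‖₂² + η₁‖x‖₀ + η₂‖x_{Ωᶜ}‖₀ over x ∈ ℝⁿ equals Σ_{i ∈ Ω} min(y_i², η₁) + Σ_{i ∉ Ω} min(y_i², η₁ + η₂). -/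
/-!
Both penalties count coordinates, so `F x = ∑ i, ((y i - x i) ^ 2 + [x i ≠ 0] w i)` with
`w i = η₁` on `Ω` and `w i = η₁ + η₂` off it. Each summand is minimised separately: at `t = 0`
it equals `y i ^ 2`, and for `t ≠ 0` it is at least `w i`, with equality at `t = y i`.
-/

open scoped Classical

open Finset

theorem isLeast_range_sum_apply {ι : Type*} [Fintype ι] {α : ι → Type*}
    {f : ∀ i, α i → ℝ} {m : ι → ℝ} (hf : ∀ i, IsLeast (Set.range (f i)) (m i)) :
    IsLeast (Set.range fun x : ∀ i, α i => ∑ i, f i (x i)) (∑ i, m i) := by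
  choose x hx using fun i => (hf i).1
  refine ⟨⟨x, sum_congr rfl fun i _ => hx i⟩, ?_⟩
  rintro _ ⟨z, rfl⟩
  exact sum_le_sum fun i _ => (hf i).2 ⟨z i, rfl⟩

theorem isLeast_range_sq_sub_add_ite_eq_zero {y w : ℝ} (hw : 0 ≤ w) :
    IsLeast (Set.range fun t : ℝ => (y - t) ^ 2 + if t = 0 then 0 else w)
      (min (y ^ 2) w) := by
  constructor
  · rcases le_total (y ^ 2) w with h | h
    · exact ⟨0, by simp [h]⟩
    · refine ⟨y, ?_⟩
      rcases eq_or_ne y 0 with rfl | hy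
      · simp [le_antisymm h (by simpa using hw)]
      · simp [hy, h]
  · rintro _ ⟨t, rfl⟩
    dsimp only
    split_ifs with ht
    · simp [ht]
    · exact (min_le_right _ _).trans (le_add_of_nonneg_left (sq_nonneg _))

theorem isLeast_range_sum_sq_sub_add_weight_l0 {ι : Type*} [Fintype ι] {y w : ι → ℝ}
    (hw : 0 ≤ w) :
    IsLeast (Set.range fun x : ι → ℝ => ∑ i, ((y i - x i) ^ 2 + if x i = 0 then 0 else w i))
      (∑ i, min (y i ^ 2) (w i)) :=
  isLeast_range_sum_apply fun i => isLeast_range_sq_sub_add_ite_eq_zero (hw i)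

/-- The minimum value of `‖y - x‖₂² + η₁‖x‖₀ + η₂‖x_{Ωᶜ}‖₀` over `x ∈ ℝⁿ`
equals `Σ_{i ∈ Ω} min(y_i², η₁) + Σ_{i ∉ Ω} min(y_i², η₁ + η₂)`. -/
theorem stmt_2 (n : ℕ) (y : Fin n → ℝ) (Ω : Finset (Fin n)) (η₁ η₂ : ℝ)
    (hη₁ : 0 < η₁) (hη₂ : 0 < η₂)
    (F : (Fin n → ℝ) → ℝ)
    (hF : ∀ x, F x = (∑ i, (y i - x i) ^ 2)
        + η₁ * (Finset.univ.filter (fun i => x i ≠ 0)).card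
        + η₂ * (Finset.univ.filter (fun i => i ∉ Ω ∧ x i ≠ 0)).card) :
    IsLeast (Set.range F)
      ((∑ i ∈ Ω, min ((y i) ^ 2) η₁)
        + ∑ i ∈ Ωᶜ, min ((y i) ^ 2) (η₁ + η₂)) := by
  set w : Fin n → ℝ := fun i => if i ∈ Ω then η₁ else η₁ + η₂
  have hw : 0 ≤ w := fun i => by dsimp [w]; split_ifs <;> positivity
  have hF' : F = fun x => ∑ i, ((y i - x i) ^ 2 + if x i = 0 then 0 else w i) := by
    funext x
    rw [hF, card_filter, card_filter]
    push_cast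
    rw [mul_sum, mul_sum, ← sum_add_distrib, ← sum_add_distrib]
    refine sum_congr rfl fun i _ => ?_
    by_cases hi : i ∈ Ω <;> by_cases hx : x i = 0 <;> simp [w, hi, hx]; ring
  have hmin : ∑ i, min (y i ^ 2) (w i)
      = (∑ i ∈ Ω, min ((y i) ^ 2) η₁) + ∑ i ∈ Ωᶜ, min ((y i) ^ 2) (η₁ + η₂) := by
    rw [← sum_add_sum_compl Ω]
    congr 1 <;> exact sum_congr rfl fun i hi => by simp_all [w]
  rw [hF', ← hmin]
  exact isLeast_range_sum_sq_sub_add_weight_l0 hw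
end

section
/- Consider an L-layer feedforward network with parameters (W^{(l)}, b^{(l)}) and a 1-Lipschitz activation σ applied entrywise, producing signals x^{(1)} = x, y^{(l)} = (W^{(l)})ᵀ x^{(l)} + b^{(l)}, x^{(l+1)} = σ(y^{(l)}). Suppose ‖W^{(l)}‖_F ≤ τ and ‖x^{(l)}‖₂ ≤ B for all l. Let Π^{(0)} = I and let Π^{(l)} be permutation matrices, and let the modified network have weights Ŵ^{(l)} with ‖Ŵ^{(l)} − Π^{(l−1)} W^{(l)} (Π^{(l)})ᵀ‖_F ≤ ε and biases b̂^{(l)} = Π^{(l)} b^{(l)}, producing signals x̂^{(l)} from the same input x. Then for every layer l, ‖Π^{(l)} x^{(l+1)} − x̂^{(l+1)}‖₂ ≤ (τ + ε)·‖Π^{(l−1)} x^{(l)} − x̂^{(l)}‖₂ + εB. -/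
open Matrix

noncomputable def frob {m n : ℕ} (A : Matrix (Fin m) (Fin n) ℝ) : ℝ :=
  Real.sqrt (∑ i, ∑ j, (A i j) ^ 2)

noncomputable def l2 {n : ℕ} (v : Fin n → ℝ) : ℝ :=
  Real.sqrt (∑ i, (v i) ^ 2)

/-- The permutation matrix of `e`, with `(permMat e) i j = 1` iff `i = e j`. -/
def permMat {n : ℕ} (e : Equiv.Perm (Fin n)) : Matrix (Fin n) (Fin n) ℝ :=
  fun i j => if i = e j then 1 else 0

section Norms

variable {m n : ℕ}

lemma l2_eq_norm (v : Fin n → ℝ) : l2 v = ‖WithLp.toLp 2 v‖ := by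
  simp [EuclideanSpace.norm_eq, l2]

lemma l2_nonneg (v : Fin n → ℝ) : 0 ≤ l2 v := Real.sqrt_nonneg _

lemma l2_sub_le (u v : Fin n → ℝ) : l2 (u - v) ≤ l2 u + l2 v := by
  simpa only [l2_eq_norm, WithLp.toLp_sub] using norm_sub_le _ _

lemma l2_le_add_l2_sub (u v : Fin n → ℝ) : l2 v ≤ l2 u + l2 (u - v) := by
  simpa only [l2_eq_norm, WithLp.toLp_sub] using norm_le_norm_add_norm_sub _ _

lemma l2_le_l2_of_abs_le {u v : Fin n → ℝ} (h : ∀ i, |u i| ≤ |v i|) : l2 u ≤ l2 v := by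
  refine Real.sqrt_le_sqrt (Finset.sum_le_sum fun i _ => ?_)
  simpa only [sq_abs] using pow_le_pow_left₀ (abs_nonneg _) (h i) 2

lemma l2_comp_perm (e : Equiv.Perm (Fin n)) (v : Fin n → ℝ) : l2 (v ∘ e) = l2 v := by
  simp only [l2, Function.comp_apply, Equiv.sum_comp e (fun i => v i ^ 2)]

lemma frob_transpose (A : Matrix (Fin m) (Fin n) ℝ) : frob Aᵀ = frob A := by
  simp only [frob, transpose_apply, Finset.sum_comm (γ := Fin n)]

lemma l2_mulVec_le (A : Matrix (Fin m) (Fin n) ℝ) (v : Fin n → ℝ) :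
    l2 (A *ᵥ v) ≤ frob A * l2 v := by
  rw [l2, frob, l2, ← Real.sqrt_mul (by positivity), Finset.sum_mul]
  exact Real.sqrt_le_sqrt <| Finset.sum_le_sum fun i _ =>
    Finset.sum_mul_sq_le_sq_mul_sq Finset.univ (A i) v

lemma l2_map_sub_map_le {σ : ℝ → ℝ} (hσ : ∀ u v : ℝ, |σ u - σ v| ≤ |u - v|)
    (y z : Fin n → ℝ) : l2 ((fun i => σ (y i)) - fun i => σ (z i)) ≤ l2 (y - z) :=
  l2_le_l2_of_abs_le fun i => hσ (y i) (z i)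

end Norms

section Permutations

variable {n : ℕ}

lemma permMat_mulVec (e : Equiv.Perm (Fin n)) (v : Fin n → ℝ) :
    permMat e *ᵥ v = v ∘ e.symm := by
  funext i
  simp only [permMat, mulVec, dotProduct, ite_mul, one_mul, zero_mul, Function.comp_apply,
    ← Equiv.symm_apply_eq (e := e), eq_comm (a := e.symm i), Finset.sum_ite_eq',
    Finset.mem_univ, if_true]

lemma permMat_transpose (e : Equiv.Perm (Fin n)) : (permMat e)ᵀ = permMat e.symm := by
  ext i j
  simp only [transpose_apply, permMat, Equiv.eq_symm_apply, eq_comm]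

lemma l2_permMat_mulVec (e : Equiv.Perm (Fin n)) (v : Fin n → ℝ) :
    l2 (permMat e *ᵥ v) = l2 v := by
  rw [permMat_mulVec, l2_comp_perm]

lemma permMat_transpose_mul_permMat (e : Equiv.Perm (Fin n)) :
    (permMat e)ᵀ * permMat e = 1 := by
  ext i j
  simp [permMat_transpose, permMat, mul_apply, one_apply]

lemma permMat_mulVec_map (e : Equiv.Perm (Fin n)) (σ : ℝ → ℝ) (y : Fin n → ℝ) :
    permMat e *ᵥ (fun i => σ (y i)) = fun i => σ ((permMat e *ᵥ y) i) := by
  simp only [permMat_mulVec]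
  rfl

end Permutations

/-- Writing `M = Π₀ W Π₁ᵀ`, the permuted pre-activation error is
`Mᵀ (Π₀ x - x̂) - (Ŵ - M)ᵀ x̂`: the biases cancel and `Π₁ Wᵀ = Mᵀ Π₀`. -/
lemma l2_preactivation_sub_le {m n : ℕ} (W Wh : Matrix (Fin m) (Fin n) ℝ)
    (e₀ : Equiv.Perm (Fin m)) (e₁ : Equiv.Perm (Fin n)) (x xh : Fin m → ℝ) (b : Fin n → ℝ) :
    l2 (permMat e₁ *ᵥ (Wᵀ *ᵥ x + b) - (Whᵀ *ᵥ xh + permMat e₁ *ᵥ b))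
      ≤ frob W * l2 (permMat e₀ *ᵥ x - xh)
        + frob (Wh - permMat e₀ * W * (permMat e₁)ᵀ) * l2 xh := by
  set M := permMat e₀ * W * (permMat e₁)ᵀ
  have hWx : permMat e₁ *ᵥ (Wᵀ *ᵥ x) = Mᵀ *ᵥ (permMat e₀ *ᵥ x) := by
    simp only [M, transpose_mul, transpose_transpose, mulVec_mulVec, Matrix.mul_assoc,
      permMat_transpose_mul_permMat, Matrix.mul_one]
  have hsplit : permMat e₁ *ᵥ (Wᵀ *ᵥ x + b) - (Whᵀ *ᵥ xh + permMat e₁ *ᵥ b)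
      = Mᵀ *ᵥ (permMat e₀ *ᵥ x - xh) - (Wh - M)ᵀ *ᵥ xh := by
    rw [mulVec_add, hWx, mulVec_sub, transpose_sub, sub_mulVec]
    abel
  have hM : l2 (Mᵀ *ᵥ (permMat e₀ *ᵥ x - xh)) ≤ frob W * l2 (permMat e₀ *ᵥ x - xh) := by
    calc l2 (Mᵀ *ᵥ (permMat e₀ *ᵥ x - xh))
        = l2 (Wᵀ *ᵥ (permMat e₀.symm *ᵥ (permMat e₀ *ᵥ x - xh))) := by
          simp only [M, transpose_mul, permMat_transpose, ← mulVec_mulVec,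
            l2_permMat_mulVec]
      _ ≤ frob W * l2 (permMat e₀ *ᵥ x - xh) := by
          rw [← frob_transpose W, ← l2_permMat_mulVec e₀.symm]
          exact l2_mulVec_le Wᵀ _
  rw [hsplit]
  refine (l2_sub_le _ _).trans (add_le_add hM ?_)
  simpa only [frob_transpose] using l2_mulVec_le (Wh - M)ᵀ xh

theorem stmt_10_general (L : ℕ) (d : ℕ → ℕ)
    (σ : ℝ → ℝ) (hσ : ∀ u v : ℝ, |σ u - σ v| ≤ |u - v|)
    (W : ∀ l, Matrix (Fin (d l)) (Fin (d (l + 1))) ℝ)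
    (b : ∀ l, Fin (d (l + 1)) → ℝ)
    (x : ∀ l, Fin (d l) → ℝ)
    (hx : ∀ l, x (l + 1) = fun i => σ (((W l)ᵀ.mulVec (x l) + b l) i))
    (τ B ε : ℝ) (hε : 0 ≤ ε)
    (hWτ : ∀ l, l < L → frob (W l) ≤ τ)
    (hxB : ∀ l, l ≤ L → l2 (x l) ≤ B)
    (e : ∀ l, Equiv.Perm (Fin (d l)))
    (Wh : ∀ l, Matrix (Fin (d l)) (Fin (d (l + 1))) ℝ)
    (hWh : ∀ l, l < L →
      frob (Wh l - permMat (e l) * W l * (permMat (e (l + 1)))ᵀ) ≤ ε)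
    (bh : ∀ l, Fin (d (l + 1)) → ℝ)
    (hbh : ∀ l, bh l = (permMat (e (l + 1))).mulVec (b l))
    (xh : ∀ l, Fin (d l) → ℝ)
    (hxh : ∀ l, xh (l + 1) = fun i => σ (((Wh l)ᵀ.mulVec (xh l) + bh l) i)) :
    ∀ l, l < L →
      l2 ((permMat (e (l + 1))).mulVec (x (l + 1)) - xh (l + 1))
        ≤ (τ + ε) * l2 ((permMat (e l)).mulVec (x l) - xh l) + ε * B := by
  intro l hl
  set u := permMat (e l) *ᵥ x l - xh l
  have hu : 0 ≤ l2 u := l2_nonneg u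
  have hxh_le : l2 (xh l) ≤ B + l2 u := by
    have := l2_le_add_l2_sub (permMat (e l) *ᵥ x l) (xh l)
    rw [l2_permMat_mulVec] at this
    linarith [hxB l hl.le]
  calc l2 (permMat (e (l + 1)) *ᵥ x (l + 1) - xh (l + 1))
      ≤ l2 (permMat (e (l + 1)) *ᵥ ((W l)ᵀ *ᵥ x l + b l) - ((Wh l)ᵀ *ᵥ xh l + bh l)) := by
        rw [hx, hxh, permMat_mulVec_map]
        exact l2_map_sub_map_le hσ _ _
    _ ≤ frob (W l) * l2 u
          + frob (Wh l - permMat (e l) * W l * (permMat (e (l + 1)))ᵀ) * l2 (xh l) := by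
        rw [hbh]
        exact l2_preactivation_sub_le _ _ _ _ _ _ _
    _ ≤ τ * l2 u + ε * (B + l2 u) := by
        exact add_le_add (mul_le_mul_of_nonneg_right (hWτ l hl) hu)
          (mul_le_mul (hWh l hl) hxh_le (l2_nonneg _) hε)
    _ = (τ + ε) * l2 u + ε * B := by ring

/-- Per-layer error bound for the RePurposed network. The original network has
signals `x (l+1) = σ((W l)ᵀ x l + b l)` started at `x 0`; the modified network
uses permutations `e l` (with `e 0 = id`), weights `Ŵ l` that are `ε`-close in
Frobenius norm to `Π^{(l)} · W l · (Π^{(l+1)})ᵀ`, and permuted biases. Then the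
permuted-signal deviation at layer `l+1` is at most `(τ+ε)` times the deviation
at layer `l` plus `εB`. -/
theorem stmt_10 (L : ℕ) (d : ℕ → ℕ)
    (σ : ℝ → ℝ) (hσ : ∀ u v : ℝ, |σ u - σ v| ≤ |u - v|)
    (W : ∀ l, Matrix (Fin (d l)) (Fin (d (l + 1))) ℝ)
    (b : ∀ l, Fin (d (l + 1)) → ℝ)
    (x : ∀ l, Fin (d l) → ℝ)
    (hx : ∀ l, x (l + 1) = fun i => σ (((W l)ᵀ.mulVec (x l) + b l) i))
    (τ B ε : ℝ) (hτ : 0 < τ) (hB : 0 < B) (hε : 0 ≤ ε)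
    (hWτ : ∀ l, l < L → frob (W l) ≤ τ)
    (hxB : ∀ l, l ≤ L → l2 (x l) ≤ B)
    (e : ∀ l, Equiv.Perm (Fin (d l)))
    (he0 : e 0 = Equiv.refl (Fin (d 0)))
    (Wh : ∀ l, Matrix (Fin (d l)) (Fin (d (l + 1))) ℝ)
    (hWh : ∀ l, l < L →
      frob (Wh l - permMat (e l) * W l * (permMat (e (l + 1)))ᵀ) ≤ ε)
    (bh : ∀ l, Fin (d (l + 1)) → ℝ)
    (hbh : ∀ l, bh l = (permMat (e (l + 1))).mulVec (b l))
    (xh : ∀ l, Fin (d l) → ℝ)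
    (hxh0 : xh 0 = x 0)
    (hxh : ∀ l, xh (l + 1) = fun i => σ (((Wh l)ᵀ.mulVec (xh l) + bh l) i)) :
    ∀ l, l < L →
      l2 ((permMat (e (l + 1))).mulVec (x (l + 1)) - xh (l + 1))
        ≤ (τ + ε) * l2 ((permMat (e l)).mulVec (x l) - xh l) + ε * B :=
  stmt_10_general L d σ hσ W b x hx τ B ε hε hWτ hxB e Wh hWh bh hbh xh hxh
end
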